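/- Let r* ≥ 1 be an integer and let M, M* ∈ ℝ^{d₁×d₂} with rank(M*) ≤ r*. Then ‖M*‖_* − ‖M‖_* + ‖M − M*‖_* ≤ (1 + √2)·√(r*)·‖M − M*‖_F. -/

import Mathlib

/-!
Let `P`, `Q` be the orthogonal projections onto the column and row spaces of `M*` and put
`Δ = M - M*`. The nuclear norm is the maximum of `⟨G, X⟩` over contractions `G`, attained at
`G = X (XᵀX)^(-1/2)`; certificates of this kind give the triangle inequality and the pinching
inequality `‖PXQ‖_* + ‖(1 - P)X(1 - Q)‖_* ≤ ‖X‖_*`. Writing `M* = PMQ - PΔQ` and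
`Δ = PΔ + (1 - P)ΔQ + (1 - P)M(1 - Q)`, they bound the left-hand side by
`‖PΔQ‖_* + ‖PΔ‖_* + ‖(1 - P)ΔQ‖_*`. These three matrices have rank at most `r*`, so by
Cauchy–Schwarz on their singular values each nuclear norm is at most `√r*` times the Frobenius
norm, and Pythagoras gives `‖PΔQ‖_F + ‖(1 - P)ΔQ‖_F ≤ √2 ‖Δ‖_F` and `‖PΔ‖_F ≤ ‖Δ‖_F`.
-/

noncomputable section

open Matrix

attribute [local instance] Matrix.normedAddCommGroup Matrix.normedSpace

/-- Euclidean norm on `ℝⁿ`. -/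
def enorm {n : ℕ} (x : Fin n → ℝ) : ℝ := Real.sqrt (∑ i, x i ^ 2)

/-- Frobenius norm of a real matrix. -/
def frob {m n : ℕ} (A : Matrix (Fin m) (Fin n) ℝ) : ℝ := Real.sqrt (∑ i, ∑ j, A i j ^ 2)

/-- Trace inner product `⟨A,B⟩ = tr(AᵀB)`. -/
def tip {m n : ℕ} (A B : Matrix (Fin m) (Fin n) ℝ) : ℝ := ∑ i, ∑ j, A i j * B i j

/-- Spectral (operator) norm: largest singular value. -/
def opNorm {m n : ℕ} (A : Matrix (Fin m) (Fin n) ℝ) : ℝ :=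
  sSup {t | ∃ x : Fin n → ℝ, _root_.enorm x ≤ 1 ∧ t = _root_.enorm (A.mulVec x)}

/-- Nuclear norm: `tr √(AᴴA)`, the sum of the singular values. -/
def nucNorm {m n : ℕ} (A : Matrix (Fin m) (Fin n) ℝ) : ℝ :=
  ((Matrix.posSemidef_conjTranspose_mul_self A).1.eigenvectorUnitary.1 *
    diagonal ((RCLike.ofReal : ℝ → ℝ) ∘ Real.sqrt ∘
      (Matrix.posSemidef_conjTranspose_mul_self A).1.eigenvalues) *
    (star (Matrix.posSemidef_conjTranspose_mul_self A).1.eigenvectorUnitary :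
      Matrix (Fin n) (Fin n) ℝ)).trace

/-- The `j`-th largest singular value of a real matrix (`1`-indexed):
the list of square roots of eigenvalues of `AᴴA`, sorted in decreasing order. -/
def singVal {m n : ℕ} (A : Matrix (Fin m) (Fin n) ℝ) (j : ℕ) : ℝ :=
  (((List.ofFn ((show (Aᵀ * A).IsHermitian by simpa using Matrix.isHermitian_conjTranspose_mul_self A).eigenvalues)).map
      Real.sqrt).insertionSort (· ≥ ·)).getD (j - 1) 0

/-- A second-order critical point of `f`: zero gradient and positive-semidefinite
Hessian quadratic form. -/
def IsSecondOrderCriticalPoint {E : Type*} [NormedAddCommGroup E] [NormedSpace ℝ E]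
    (f : E → ℝ) (x : E) : Prop :=
  fderiv ℝ f x = 0 ∧ ∀ v : E, 0 ≤ fderiv ℝ (fun y => fderiv ℝ f y v) x v

/-- The gradient of `φ` at `M`, w.r.t. the trace inner product. -/
def gradM {m n : ℕ} (φ : Matrix (Fin m) (Fin n) ℝ → ℝ) (M : Matrix (Fin m) (Fin n) ℝ) :
    Matrix (Fin m) (Fin n) ℝ :=
  Matrix.of fun i j => fderiv ℝ φ M (Matrix.single i j 1)

/-- Hessian quadratic form `∇²φ(M)[E,E]`. -/
def hess {m n : ℕ} (φ : Matrix (Fin m) (Fin n) ℝ → ℝ) (M E : Matrix (Fin m) (Fin n) ℝ) : ℝ :=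
  fderiv ℝ (fun N => fderiv ℝ φ N E) M E

/-- Adjoint of a linear measurement map, w.r.t. the trace inner product. -/
def adj {m n p : ℕ} (A : Matrix (Fin m) (Fin n) ℝ →ₗ[ℝ] (Fin p → ℝ)) (ξ : Fin p → ℝ) :
    Matrix (Fin m) (Fin n) ℝ :=
  Matrix.of fun i j => ∑ k, ξ k * A (Matrix.single i j 1) k

/-- The subspace `S_d` of `d × d` real symmetric matrices. -/
def SymSpace (d : ℕ) : Submodule ℝ (Matrix (Fin d) (Fin d) ℝ) where
  carrier := {A | Aᵀ = A}
  add_mem' := by intro a b ha hb; simp only [Set.mem_setOf_eq, Matrix.transpose_add] at *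
                 rw [ha, hb]
  zero_mem' := by simp
  smul_mem' := by intro c A hA; simp only [Set.mem_setOf_eq, Matrix.transpose_smul] at *
                  rw [hA]

lemma mem_symSpace {d : ℕ} {A : Matrix (Fin d) (Fin d) ℝ} : A ∈ SymSpace d ↔ Aᵀ = A := Iff.rfl

lemma stdBasis_symm {d : ℕ} (i j : Fin d) :
    Matrix.single i j (1:ℝ) + Matrix.single j i 1 ∈ SymSpace d := by
  rw [mem_symSpace, Matrix.transpose_add]
  ext a b
  simp only [Matrix.add_apply, Matrix.transpose_apply, Matrix.single, Matrix.of_apply]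
  rw [add_comm]
  congr 1 <;> · congr 1; rw [eq_iff_iff, and_comm]

/-- The symmetrized elementary matrix `E_ij + E_ji` as an element of `S_d`. -/
def symBasis {d : ℕ} (i j : Fin d) : SymSpace d :=
  ⟨Matrix.single i j 1 + Matrix.single j i 1, stdBasis_symm i j⟩

lemma mmT_mem {d r : ℕ} (U : Matrix (Fin d) (Fin r) ℝ) : U * Uᵀ ∈ SymSpace d := by
  rw [mem_symSpace, Matrix.transpose_mul, Matrix.transpose_transpose]

/-- `U ↦ UUᵀ` as an element of `S_d`. -/
def mmT {d r : ℕ} (U : Matrix (Fin d) (Fin r) ℝ) : SymSpace d := ⟨U * Uᵀ, mmT_mem U⟩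

/-- The gradient of `φ : S_d → ℝ` at `M`, as the symmetric matrix representing the
derivative w.r.t. the trace inner product on `S_d`. -/
def gradS {d : ℕ} (φ : SymSpace d → ℝ) (M : SymSpace d) : Matrix (Fin d) (Fin d) ℝ :=
  Matrix.of fun i j => (1/2) * fderiv ℝ φ M (symBasis i j)

/-- Hessian quadratic form of `φ : S_d → ℝ`. -/
def hessS {d : ℕ} (φ : SymSpace d → ℝ) (M E : SymSpace d) : ℝ :=
  fderiv ℝ (fun N => fderiv ℝ φ N E) M E

/-- Adjoint of a linear map `𝒜 : S_d → ℝⁿ` w.r.t. the trace inner product on `S_d`. -/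
def adjS {d p : ℕ} (A : SymSpace d →ₗ[ℝ] (Fin p → ℝ)) (ξ : Fin p → ℝ) :
    Matrix (Fin d) (Fin d) ℝ :=
  Matrix.of fun i j => (1/2) * ∑ k, ξ k * A (symBasis i j) k

/-- `P` is the orthogonal projection matrix onto the column space of `U`:
it is symmetric, idempotent, and has the same range as `U`. -/
def IsOrthProjCol {d r : ℕ} (P : Matrix (Fin d) (Fin d) ℝ) (U : Matrix (Fin d) (Fin r) ℝ) :
    Prop :=
  Pᵀ = P ∧ P * P = P ∧ P * U = U ∧ ∃ W : Matrix (Fin r) (Fin d) ℝ, P = U * W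

open scoped MatrixOrder

namespace Matrix

variable {ι 𝕜 : Type*} [Fintype ι] [DecidableEq ι] [RCLike 𝕜]

protected theorem cfc_mul (f g : ℝ → ℝ) (H : Matrix ι ι 𝕜) :
    cfc (fun t => f t * g t) H = cfc f H * cfc g H :=
  cfc_mul f g H (H.finite_real_spectrum.continuousOn f) (H.finite_real_spectrum.continuousOn g)

theorem IsHermitian.cfc_mul_id {H : Matrix ι ι 𝕜} (hH : H.IsHermitian) (f : ℝ → ℝ) :
    cfc (fun t => f t * t) H = cfc f H * H := by
  rw [Matrix.cfc_mul, cfc_id' ℝ H hH.isSelfAdjoint]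

theorem IsHermitian.cfc_id_mul {H : Matrix ι ι 𝕜} (hH : H.IsHermitian) (f : ℝ → ℝ) :
    cfc (fun t => t * f t) H = H * cfc f H := by
  rw [Matrix.cfc_mul, cfc_id' ℝ H hH.isSelfAdjoint]

theorem conjTranspose_cfc (f : ℝ → ℝ) (H : Matrix ι ι 𝕜) : (cfc f H)ᴴ = cfc f H :=
  (cfc_predicate f H : IsSelfAdjoint _)

theorem IsHermitian.trace_cfc {H : Matrix ι ι 𝕜} (hH : H.IsHermitian) (f : ℝ → ℝ) :
    (cfc f H).trace = ∑ i, (f (hH.eigenvalues i) : 𝕜) := by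
  rw [hH.cfc_eq, IsHermitian.cfc, Unitary.conjStarAlgAut_apply, trace_mul_cycle,
    Unitary.coe_star_mul_self, one_mul, trace_diagonal]
  rfl

theorem conjTranspose_mul_self_le_of_mul_eq {κ : Type*} [Fintype κ] {G : Matrix κ ι 𝕜} {Q : Matrix ι ι 𝕜}
    (hG : Gᴴ * G ≤ 1) (hQ : IsStarProjection Q) (hGQ : G * Q = G) : Gᴴ * G ≤ Q :=
  calc Gᴴ * G = star Q * (Gᴴ * G) * Q := by
        conv_lhs => rw [← hGQ, conjTranspose_mul, ← star_eq_conjTranspose]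
        simp only [Matrix.mul_assoc]
    _ ≤ star Q * 1 * Q := star_left_conjugate_le_conjugate hG Q
    _ = Q := by rw [Matrix.mul_one, hQ.isSelfAdjoint.star_eq, hQ.isIdempotentElem.eq]

end Matrix

variable {m n : ℕ}

theorem nucNorm_eq_trace_cfc (X : Matrix (Fin m) (Fin n) ℝ) :
    nucNorm X = (cfc Real.sqrt (Xᴴ * X)).trace := by
  rw [(isHermitian_conjTranspose_mul_self X).cfc_eq]
  rfl

theorem nucNorm_eq_sum_sqrt_eigenvalues (X : Matrix (Fin m) (Fin n) ℝ) :
    nucNorm X = ∑ i, √((isHermitian_conjTranspose_mul_self X).eigenvalues i) := by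
  rw [nucNorm_eq_trace_cfc, (isHermitian_conjTranspose_mul_self X).trace_cfc]
  rfl

theorem nucNorm_neg (X : Matrix (Fin m) (Fin n) ℝ) : nucNorm (-X) = nucNorm X := by
  simp only [nucNorm_eq_trace_cfc, conjTranspose_neg, Matrix.neg_mul, Matrix.mul_neg, neg_neg]

theorem tip_eq_trace (A B : Matrix (Fin m) (Fin n) ℝ) : tip A B = (Aᴴ * B).trace := by
  rw [tip, trace, Finset.sum_comm]
  simp [mul_apply]

theorem frob_eq_sqrt_tip (A : Matrix (Fin m) (Fin n) ℝ) : frob A = √(tip A A) := by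
  simp only [frob, tip, sq]

theorem tip_add_right (A B C : Matrix (Fin m) (Fin n) ℝ) : tip A (B + C) = tip A B + tip A C := by
  simp only [tip, Matrix.add_apply, mul_add, Finset.sum_add_distrib]

theorem tip_add_left (A B C : Matrix (Fin m) (Fin n) ℝ) : tip (A + B) C = tip A C + tip B C := by
  simp only [tip, Matrix.add_apply, add_mul, Finset.sum_add_distrib]

theorem tip_mul_left {k : ℕ} (C : Matrix (Fin m) (Fin k) ℝ) (A : Matrix (Fin k) (Fin n) ℝ)
    (B : Matrix (Fin m) (Fin n) ℝ) : tip (C * A) B = tip A (Cᴴ * B) := by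
  rw [tip_eq_trace, tip_eq_trace, conjTranspose_mul, Matrix.mul_assoc]

theorem tip_mul_right {k : ℕ} (A : Matrix (Fin m) (Fin k) ℝ) (C : Matrix (Fin k) (Fin n) ℝ)
    (B : Matrix (Fin m) (Fin n) ℝ) : tip (A * C) B = tip A (B * Cᴴ) := by
  rw [tip_eq_trace, tip_eq_trace, conjTranspose_mul, Matrix.mul_assoc, trace_mul_comm,
    Matrix.mul_assoc]

theorem tip_le_sum_sqrt_mul_sqrt (A B : Matrix (Fin m) (Fin n) ℝ) :
    tip A B ≤ ∑ j, √((Aᴴ * A) j j) * √((Bᴴ * B) j j) := by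
  rw [tip, Finset.sum_comm]
  gcongr with j
  simpa [mul_apply, sq] using Real.sum_mul_le_sqrt_mul_sqrt Finset.univ (fun i => A i j) (B · j)

theorem tip_le_nucNorm {G X : Matrix (Fin m) (Fin n) ℝ} (hG : Gᴴ * G ≤ 1) :
    tip G X ≤ nucNorm X := by
  have hH := isHermitian_conjTranspose_mul_self X
  set U : Matrix (Fin n) (Fin n) ℝ := ↑hH.eigenvectorUnitary
  have hU : U ∈ unitaryGroup (Fin n) ℝ := hH.eigenvectorUnitary.2
  have conj (A : Matrix (Fin m) (Fin n) ℝ) : (A * U)ᴴ * (A * U) = star U * (Aᴴ * A) * U := by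
    rw [conjTranspose_mul, star_eq_conjTranspose]
    simp only [Matrix.mul_assoc]
  have hXU : (X * U)ᴴ * (X * U) = diagonal hH.eigenvalues := by
    have := hH.conjStarAlgAut_star_eigenvectorUnitary
    rw [Unitary.conjStarAlgAut_apply, Unitary.coe_star, star_star] at this
    rw [conj, this]
    rfl
  have hGU : (G * U)ᴴ * (G * U) ≤ 1 := by
    have := star_left_conjugate_le_conjugate hG U
    rwa [Matrix.mul_one, Unitary.star_mul_self_of_mem hU, ← conj] at this
  calc tip G X = tip (G * U) (X * U) := by
        rw [tip_mul_right, Matrix.mul_assoc, ← star_eq_conjTranspose,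
          Unitary.mul_star_self_of_mem hU, Matrix.mul_one]
    _ ≤ ∑ j, √(((G * U)ᴴ * (G * U)) j j) * √(((X * U)ᴴ * (X * U)) j j) :=
        tip_le_sum_sqrt_mul_sqrt _ _
    _ ≤ ∑ j, 1 * √(hH.eigenvalues j) := by
        gcongr with j
        · simpa using (le_iff.mp hGU).diag_nonneg (i := j)
        · rw [hXU, diagonal_apply_eq]
    _ = nucNorm X := by simp [nucNorm_eq_sum_sqrt_eigenvalues]

theorem exists_contraction_tip_eq_nucNorm (Y : Matrix (Fin m) (Fin n) ℝ) :
    ∃ G : Matrix (Fin m) (Fin n) ℝ, Gᴴ * G ≤ 1 ∧ tip G Y = nucNorm Y ∧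
      (∀ P : Matrix (Fin m) (Fin m) ℝ, P * Y = Y → P * G = G) ∧
      (∀ Q : Matrix (Fin n) (Fin n) ℝ, Y * Q = Y → G * Q = G) := by
  set H := Yᴴ * Y
  have hH : H.IsHermitian := isHermitian_conjTranspose_mul_self Y
  set K := cfc (fun t => (√t)⁻¹) H
  refine ⟨Y * K, ?_, ?_, fun P hP => by rw [← Matrix.mul_assoc, hP], fun Q hQ => ?_⟩
  · have : (Y * K)ᴴ * (Y * K) = cfc (fun t => (√t)⁻¹ * t * (√t)⁻¹) H := by
      rw [Matrix.cfc_mul, hH.cfc_mul_id, conjTranspose_mul, conjTranspose_cfc]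
      simp only [H, K, Matrix.mul_assoc]
    rw [this]
    refine cfc_le_one _ _ fun t _ => ?_
    rcases le_or_gt t 0 with ht | ht
    · simp [Real.sqrt_eq_zero_of_nonpos ht]
    · rw [mul_inv_le_iff₀ (Real.sqrt_pos.mpr ht), one_mul, ← div_eq_inv_mul, Real.div_sqrt]
  · rw [tip_eq_trace, conjTranspose_mul, conjTranspose_cfc, Matrix.mul_assoc, ← hH.cfc_mul_id,
      nucNorm_eq_trace_cfc]
    simp only [← div_eq_inv_mul, Real.div_sqrt]
    rfl
  · have hK : K = cfc (fun t => (√t)⁻¹ * t⁻¹) H * H := by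
      rw [← hH.cfc_mul_id]
      refine congrArg (cfc · H) (funext fun t => ?_)
      rcases eq_or_ne t 0 with rfl | ht
      · simp
      · rw [inv_mul_cancel_right₀ ht]
    rw [hK, Matrix.mul_assoc, Matrix.mul_assoc, Matrix.mul_assoc, hQ]

theorem nucNorm_add_le (A B : Matrix (Fin m) (Fin n) ℝ) :
    nucNorm (A + B) ≤ nucNorm A + nucNorm B := by
  obtain ⟨G, hG, hGAB, -, -⟩ := exists_contraction_tip_eq_nucNorm (A + B)
  rw [← hGAB, tip_add_right]
  exact add_le_add (tip_le_nucNorm hG) (tip_le_nucNorm hG)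

theorem nucNorm_sub_le (A B : Matrix (Fin m) (Fin n) ℝ) :
    nucNorm (A - B) ≤ nucNorm A + nucNorm B := by
  simpa [sub_eq_add_neg, nucNorm_neg] using nucNorm_add_le A (-B)

theorem tip_eq_tip_mul_mul {G X : Matrix (Fin m) (Fin n) ℝ} {P : Matrix (Fin m) (Fin m) ℝ}
    {Q : Matrix (Fin n) (Fin n) ℝ} (hP : IsSelfAdjoint P) (hQ : IsSelfAdjoint Q)
    (hPG : P * G = G) (hGQ : G * Q = G) : tip G X = tip G (P * X * Q) :=
  calc tip G X = tip (P * G * Q) X := by rw [hPG, hGQ]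
    _ = tip G (Pᴴ * X * Qᴴ) := by rw [tip_mul_right, tip_mul_left, Matrix.mul_assoc]
    _ = tip G (P * X * Q) := by
        rw [← star_eq_conjTranspose, ← star_eq_conjTranspose, hP.star_eq, hQ.star_eq]

theorem nucNorm_pinch_le (X : Matrix (Fin m) (Fin n) ℝ) {P : Matrix (Fin m) (Fin m) ℝ}
    {Q : Matrix (Fin n) (Fin n) ℝ} (hP : IsStarProjection P) (hQ : IsStarProjection Q) :
    nucNorm (P * X * Q) + nucNorm ((1 - P) * X * (1 - Q)) ≤ nucNorm X := by
  obtain ⟨G₁, hG₁, htip₁, hPG₁, hG₁Q⟩ := exists_contraction_tip_eq_nucNorm (P * X * Q)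
  obtain ⟨G₂, hG₂, htip₂, hPG₂, hG₂Q⟩ :=
    exists_contraction_tip_eq_nucNorm ((1 - P) * X * (1 - Q))
  have hP' := hP.one_sub
  have hQ' := hQ.one_sub
  replace hPG₁ := hPG₁ P (by rw [← Matrix.mul_assoc, ← Matrix.mul_assoc, hP.isIdempotentElem.eq])
  replace hG₁Q := hG₁Q Q (by rw [Matrix.mul_assoc, hQ.isIdempotentElem.eq])
  replace hPG₂ := hPG₂ (1 - P)
    (by rw [← Matrix.mul_assoc, ← Matrix.mul_assoc, hP'.isIdempotentElem.eq])
  replace hG₂Q := hG₂Q (1 - Q) (by rw [Matrix.mul_assoc, hQ'.isIdempotentElem.eq])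
  -- the two certificates live on orthogonal ranges, so their sum is still a contraction
  have hcross : G₁ᴴ * G₂ = 0 := by
    rw [← hPG₁, ← hPG₂, conjTranspose_mul, ← star_eq_conjTranspose P, hP.isSelfAdjoint.star_eq,
      Matrix.mul_assoc, ← Matrix.mul_assoc P, hP.mul_one_sub_self, Matrix.zero_mul,
      Matrix.mul_zero]
  have hcross' : G₂ᴴ * G₁ = 0 := by
    simpa only [conjTranspose_mul, conjTranspose_conjTranspose, conjTranspose_zero] using
      congrArg conjTranspose hcross
  have hG : (G₁ + G₂)ᴴ * (G₁ + G₂) ≤ 1 :=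
    calc (G₁ + G₂)ᴴ * (G₁ + G₂) = G₁ᴴ * G₁ + G₂ᴴ * G₂ := by
          rw [conjTranspose_add, Matrix.add_mul, Matrix.mul_add, Matrix.mul_add, hcross, hcross',
            add_zero, zero_add]
      _ ≤ Q + (1 - Q) := add_le_add (conjTranspose_mul_self_le_of_mul_eq hG₁ hQ hG₁Q)
          (conjTranspose_mul_self_le_of_mul_eq hG₂ hQ' hG₂Q)
      _ = 1 := add_sub_cancel _ _
  calc nucNorm (P * X * Q) + nucNorm ((1 - P) * X * (1 - Q)) = tip (G₁ + G₂) X := by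
        rw [tip_add_left, tip_eq_tip_mul_mul hP.isSelfAdjoint hQ.isSelfAdjoint hPG₁ hG₁Q,
          tip_eq_tip_mul_mul hP'.isSelfAdjoint hQ'.isSelfAdjoint hPG₂ hG₂Q, htip₁, htip₂]
    _ ≤ nucNorm X := tip_le_nucNorm hG

theorem tip_self_nonneg (A : Matrix (Fin m) (Fin n) ℝ) : 0 ≤ tip A A :=
  Finset.sum_nonneg fun _ _ => Finset.sum_nonneg fun _ _ => mul_self_nonneg _

theorem frob_sq (A : Matrix (Fin m) (Fin n) ℝ) : frob A ^ 2 = tip A A := by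
  rw [frob_eq_sqrt_tip, Real.sq_sqrt (tip_self_nonneg A)]

theorem frob_sq_add_frob_sq_mul_left {P : Matrix (Fin m) (Fin m) ℝ} (hP : IsStarProjection P)
    (X : Matrix (Fin m) (Fin n) ℝ) : frob (P * X) ^ 2 + frob ((1 - P) * X) ^ 2 = frob X ^ 2 := by
  have key {R : Matrix (Fin m) (Fin m) ℝ} (hR : IsStarProjection R) :
      tip (R * X) (R * X) = tip X (R * X) := by
    rw [tip_mul_left, ← Matrix.mul_assoc, ← star_eq_conjTranspose, hR.isSelfAdjoint.star_eq,
      hR.isIdempotentElem.eq]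
  rw [frob_sq, frob_sq, frob_sq, key hP, key hP.one_sub, ← tip_add_right, ← Matrix.add_mul,
    add_sub_cancel, Matrix.one_mul]

theorem frob_sq_add_frob_sq_mul_right {Q : Matrix (Fin n) (Fin n) ℝ} (hQ : IsStarProjection Q)
    (X : Matrix (Fin m) (Fin n) ℝ) : frob (X * Q) ^ 2 + frob (X * (1 - Q)) ^ 2 = frob X ^ 2 := by
  have key {R : Matrix (Fin n) (Fin n) ℝ} (hR : IsStarProjection R) :
      tip (X * R) (X * R) = tip X (X * R) := by
    rw [tip_mul_right, Matrix.mul_assoc, ← star_eq_conjTranspose, hR.isSelfAdjoint.star_eq,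
      hR.isIdempotentElem.eq]
  rw [frob_sq, frob_sq, frob_sq, key hQ, key hQ.one_sub, ← tip_add_right, ← Matrix.mul_add,
    add_sub_cancel, Matrix.mul_one]

theorem frob_nonneg (A : Matrix (Fin m) (Fin n) ℝ) : 0 ≤ frob A := Real.sqrt_nonneg _

theorem frob_mul_left_le {P : Matrix (Fin m) (Fin m) ℝ} (hP : IsStarProjection P)
    (X : Matrix (Fin m) (Fin n) ℝ) : frob (P * X) ≤ frob X :=
  (pow_le_pow_iff_left₀ (frob_nonneg _) (frob_nonneg _) two_ne_zero).mp <| by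
    linarith [frob_sq_add_frob_sq_mul_left hP X, sq_nonneg (frob ((1 - P) * X))]

theorem frob_mul_right_le {Q : Matrix (Fin n) (Fin n) ℝ} (hQ : IsStarProjection Q)
    (X : Matrix (Fin m) (Fin n) ℝ) : frob (X * Q) ≤ frob X :=
  (pow_le_pow_iff_left₀ (frob_nonneg _) (frob_nonneg _) two_ne_zero).mp <| by
    linarith [frob_sq_add_frob_sq_mul_right hQ X, sq_nonneg (frob (X * (1 - Q)))]

theorem frob_mul_add_frob_one_sub_mul_le {P : Matrix (Fin m) (Fin m) ℝ} (hP : IsStarProjection P)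
    (X : Matrix (Fin m) (Fin n) ℝ) : frob (P * X) + frob ((1 - P) * X) ≤ √2 * frob X := by
  have h := frob_sq_add_frob_sq_mul_left hP X
  have h2 : (√2 * frob X) ^ 2 = 2 * frob X ^ 2 := by rw [mul_pow, Real.sq_sqrt zero_le_two]
  nlinarith [sq_nonneg (frob (P * X) - frob ((1 - P) * X)),
    mul_nonneg (Real.sqrt_nonneg 2) (frob_nonneg X)]

theorem nucNorm_le_sqrt_mul_frob {X : Matrix (Fin m) (Fin n) ℝ} {k : ℕ} (hk : X.rank ≤ k) :
    nucNorm X ≤ √k * frob X := by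
  have hH := isHermitian_conjTranspose_mul_self X
  set ev := hH.eigenvalues
  have hev : ∀ i, 0 ≤ ev i := (posSemidef_conjTranspose_mul_self X).eigenvalues_nonneg
  set s := Finset.univ.filter fun i => ev i ≠ 0
  have hs : (s.card : ℝ) ≤ k := by
    have : s.card = X.rank := by
      rw [← rank_conjTranspose_mul_self, hH.rank_eq_card_non_zero_eigs, Fintype.card_subtype]
    exact_mod_cast this ▸ hk
  have hfrob : frob X = √(∑ i, ev i) := by
    rw [frob_eq_sqrt_tip, tip_eq_trace, hH.trace_eq_sum_eigenvalues]
    rfl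
  have hsum : ∑ i ∈ s, √(ev i) = ∑ i, √(ev i) :=
    Finset.sum_filter_of_ne fun i _ h h0 => h (by rw [h0, Real.sqrt_zero])
  rw [nucNorm_eq_sum_sqrt_eigenvalues, hfrob, ← hsum]
  calc ∑ i ∈ s, √(ev i) = ∑ i ∈ s, 1 * √(ev i) := by simp only [one_mul]
    _ ≤ √(∑ i ∈ s, 1 ^ 2) * √(∑ i ∈ s, √(ev i) ^ 2) := Real.sum_mul_le_sqrt_mul_sqrt _ _ _
    _ ≤ √k * √(∑ i, ev i) := by
        simp only [one_pow, Finset.sum_const, nsmul_eq_mul, mul_one, Real.sq_sqrt (hev _)]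
        gcongr
        exacts [fun i _ _ => hev i, Finset.subset_univ s]

theorem exists_isOrthProjCol {d r : ℕ} (U : Matrix (Fin d) (Fin r) ℝ) : ∃ P, IsOrthProjCol P U := by
  set H := U * Uᴴ
  have hH : H.IsHermitian := isHermitian_mul_conjTranspose_self U
  set P := cfc (fun t : ℝ => t * t⁻¹) H
  have hPH : P * H = H := by
    rw [← hH.cfc_mul_id]
    simp_rw [mul_inv_mul_cancel]
    exact cfc_id' ℝ H hH.isSelfAdjoint
  refine ⟨P, ?_, ?_, ?_, Uᴴ * cfc (fun t : ℝ => t⁻¹) H, ?_⟩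
  · rw [← conjTranspose_eq_transpose_of_trivial, conjTranspose_cfc]
  · rw [← Matrix.cfc_mul]
    simp_rw [← mul_assoc, mul_inv_mul_cancel]
    rfl
  · have := (mul_self_mul_conjTranspose_eq_zero U (P - 1)).mp
      (by rw [Matrix.sub_mul, hPH, Matrix.one_mul, sub_self])
    rwa [Matrix.sub_mul, Matrix.one_mul, sub_eq_zero] at this
  · rw [← Matrix.mul_assoc, ← hH.cfc_id_mul]

namespace IsOrthProjCol

variable {d r : ℕ} {P : Matrix (Fin d) (Fin d) ℝ} {U : Matrix (Fin d) (Fin r) ℝ}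

theorem isStarProjection (h : IsOrthProjCol P U) : IsStarProjection P :=
  ⟨h.2.1, by rw [IsSelfAdjoint, star_eq_conjTranspose, conjTranspose_eq_transpose_of_trivial, h.1]⟩

theorem rank_le (h : IsOrthProjCol P U) : P.rank ≤ U.rank := by
  obtain ⟨W, rfl⟩ := h.2.2.2
  exact rank_mul_le_left U W

end IsOrthProjCol

theorem nucNorm_sub_nucNorm_add_nucNorm_sub_le {M N : Matrix (Fin m) (Fin n) ℝ}
    {P : Matrix (Fin m) (Fin m) ℝ} {Q : Matrix (Fin n) (Fin n) ℝ}
    (hP : IsStarProjection P) (hQ : IsStarProjection Q) (hPN : P * N = N) (hNQ : N * Q = N) :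
    nucNorm N - nucNorm M + nucNorm (M - N) ≤
      nucNorm (P * (M - N) * Q) + nucNorm (P * (M - N)) + nucNorm ((1 - P) * (M - N) * Q) := by
  set Δ := M - N
  have hN : nucNorm N ≤ nucNorm (P * M * Q) + nucNorm (P * Δ * Q) := by
    have : N = P * M * Q - P * Δ * Q := by
      rw [Matrix.mul_sub, Matrix.sub_mul, hPN, hNQ, sub_sub_cancel]
    exact this ▸ nucNorm_sub_le _ _
  have hΔ : nucNorm Δ ≤
      nucNorm (P * Δ) + nucNorm ((1 - P) * Δ * Q) + nucNorm ((1 - P) * M * (1 - Q)) := by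
    have h1P : (1 - P) * Δ = (1 - P) * M := by
      rw [Matrix.mul_sub, Matrix.sub_mul 1 P N, Matrix.one_mul, hPN, sub_self, sub_zero]
    have : Δ = P * Δ + (1 - P) * Δ * Q + (1 - P) * M * (1 - Q) := by
      rw [← h1P, add_assoc, ← Matrix.mul_add, add_sub_cancel, Matrix.mul_one, ← Matrix.add_mul,
        add_sub_cancel, Matrix.one_mul]
    calc nucNorm Δ = nucNorm (P * Δ + (1 - P) * Δ * Q + (1 - P) * M * (1 - Q)) := by rw [← this]
      _ ≤ _ := (nucNorm_add_le _ _).trans (add_le_add_left (nucNorm_add_le _ _) _)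
  linarith [nucNorm_pinch_le M hP hQ]

theorem nuclear_norm_comparison_general
    (d₁ d₂ rs : ℕ)
    (M Mst : Matrix (Fin d₁) (Fin d₂) ℝ) (hMst : Mst.rank ≤ rs) :
    nucNorm Mst - nucNorm M + nucNorm (M - Mst) ≤
      (1 + Real.sqrt 2) * Real.sqrt rs * frob (M - Mst) := by
  obtain ⟨P, hP⟩ := exists_isOrthProjCol Mst
  obtain ⟨Q, hQ⟩ := exists_isOrthProjCol Mstᵀ
  have hMstQ : Mst * Q = Mst := by
    simpa [transpose_mul, hQ.1] using congrArg transpose hQ.2.2.1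
  have hPr : P.rank ≤ rs := hP.rank_le.trans hMst
  have hQr : Q.rank ≤ rs := hQ.rank_le.trans ((rank_transpose Mst).trans_le hMst)
  have hP' := hP.isStarProjection
  have hQ' := hQ.isStarProjection
  set Δ := M - Mst
  calc nucNorm Mst - nucNorm M + nucNorm Δ
      ≤ nucNorm (P * Δ * Q) + nucNorm (P * Δ) + nucNorm ((1 - P) * Δ * Q) :=
        nucNorm_sub_nucNorm_add_nucNorm_sub_le hP' hQ' hP.2.2.1 hMstQ
    _ ≤ √rs * frob (P * Δ * Q) + √rs * frob (P * Δ) + √rs * frob ((1 - P) * Δ * Q) := by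
        gcongr <;> apply nucNorm_le_sqrt_mul_frob
        · exact ((rank_mul_le_left _ _).trans (rank_mul_le_left _ _)).trans hPr
        · exact (rank_mul_le_left _ _).trans hPr
        · exact (rank_mul_le_right _ _).trans hQr
    _ = √rs * (frob (P * (Δ * Q)) + frob ((1 - P) * (Δ * Q))) + √rs * frob (P * Δ) := by
        simp only [Matrix.mul_assoc]
        ring
    _ ≤ √rs * (√2 * frob Δ) + √rs * frob Δ := by
        gcongr
        · exact (frob_mul_add_frob_one_sub_mul_le hP' _).trans (by gcongr; exact frob_mul_right_le hQ' Δ)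
        · exact frob_mul_left_le hP' Δ
    _ = (1 + √2) * √rs * frob Δ := by ring

/-- Lemma: nuclear norm comparison inequality. -/
theorem nuclear_norm_comparison
    (d₁ d₂ rs : ℕ) (hrs : 1 ≤ rs)
    (M Mst : Matrix (Fin d₁) (Fin d₂) ℝ) (hMst : Mst.rank ≤ rs) :
    nucNorm Mst - nucNorm M + nucNorm (M - Mst) ≤
      (1 + Real.sqrt 2) * Real.sqrt rs * frob (M - Mst) :=
  nuclear_norm_comparison_general d₁ d₂ rs M Mst hMst

end
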